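/- Fix a = 1/(2m − 1) with m a positive integer, and consider the strip-crossing recurrences with initial data a_0 = a, α_0 = 0, and h_0 = ℓ·a where ℓ is a positive integer. Then the trajectory is expanding: for all n ∈ ℕ, a_n = a and h_{2n} = h_0 + 2n·a; in particular h_{2n} → +∞ as n → ∞. -/

import Mathlib

/-!
Since `1/a = 2m - 1` is odd, `(1 - a)/a = 2m - 2` is an even integer, so a step from `a_n = a`
has `γ_n` even and `β_n = 0` and merely sends `h` to `-(h + (-1)^{α_n} a)`. Starting from
`h₀ = ℓ a` this gives `h_n = (-1)^n (ℓ + n) a`: then `2|h_{n+1}|/a` is an even integer, so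
`a_{n+1} = a` again and `α_{n+1} = (n + 1) mod 2` keeps tracking the sign of `h_{n+1}`.
-/

/-- One step of the strip-crossing recurrences: from the triple `(h_n, a_n, α_n)`
compute `γ_n = ⌊(1 − a_n)/a⌋`, `β_n = a·frac((1 − a_n)/a)`, and then
`h_{n+1} = −(h_n + (−1)^{α_n}·(a_n + (−1)^{γ_n+1}·β_n − (1 − (−1)^{γ_n})·a/2))`,
`α_{n+1} = (α_n + γ_n + 1 + ⌊(2|h_{n+1}| + β_n)/a⌋) mod 2`,
`a_{n+1} = a·(1 − frac((2|h_{n+1}| + β_n)/a))`. -/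
noncomputable def stripStep (a : ℝ) (s : ℝ × ℝ × ℤ) : ℝ × ℝ × ℤ :=
  let h := s.1
  let an := s.2.1
  let α := s.2.2
  let γ : ℤ := ⌊(1 - an) / a⌋
  let β : ℝ := a * Int.fract ((1 - an) / a)
  let h' : ℝ :=
    -(h + (-1 : ℝ) ^ α * (an + (-1 : ℝ) ^ (γ + 1) * β - (1 - (-1 : ℝ) ^ γ) * a / 2))
  let α' : ℤ := (α + γ + 1 + ⌊(2 * |h'| + β) / a⌋) % 2
  let a' : ℝ := a * (1 - Int.fract ((2 * |h'| + β) / a))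
  (h', a', α')

lemma neg_one_zpow_emod_two {R : Type*} [DivisionRing R] (z : ℤ) :
    (-1 : R) ^ (z % 2) = (-1) ^ z := by
  rcases Int.emod_two_eq_zero_or_one z with h | h <;> rw [h]
  · rw [(Int.even_iff.mpr h).neg_one_zpow, zpow_zero]
  · rw [(Int.odd_iff.mpr h).neg_one_zpow, zpow_one]

lemma exists_two_mul_abs_intCast_mul_div_eq (c : ℤ) (a : ℝ) :
    ∃ j : ℤ, 2 * |c * a| / a = 2 * j := by
  rcases lt_trichotomy a 0 with ha | rfl | ha
  · exact ⟨-|c|, by rw [abs_mul, abs_of_neg ha]; push_cast; field_simp [ha.ne]⟩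
  · exact ⟨0, by simp⟩
  · exact ⟨|c|, by rw [abs_mul, abs_of_pos ha]; push_cast; field_simp⟩

section

variable {a : ℝ} {k : ℤ}

lemma stripStep_of_div_eq_two_mul (hk : (1 - a) / a = 2 * k) {h : ℝ} {α j : ℤ}
    (hj : 2 * |h + (-1) ^ α * a| / a = 2 * j) :
    stripStep a (h, a, α) = (-(h + (-1) ^ α * a), a, (α + 1) % 2) := by
  have hγ : (-1 : ℝ) ^ (2 * k) = 1 := (even_two_mul k).neg_one_zpow
  have hk' : (1 - a) / a = ((2 * k : ℤ) : ℝ) := by push_cast; exact hk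
  have hj' : 2 * |h + (-1) ^ α * a| / a = ((2 * j : ℤ) : ℝ) := by push_cast; exact hj
  simp only [stripStep, hk', Int.floor_intCast, Int.fract_intCast, mul_zero, add_zero, hγ,
    sub_self, zero_mul, zero_div, sub_zero, abs_neg, hj']
  refine Prod.ext rfl (Prod.ext (by simp) ?_)
  dsimp only
  omega

lemma stripStep_iterate_of_div_eq_two_mul (hk : (1 - a) / a = 2 * k) (ℓ : ℤ) (n : ℕ) :
    (stripStep a)^[n] (ℓ * a, a, 0) = ((-1) ^ n * (ℓ + n) * a, a, (n : ℤ) % 2) := by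
  induction n with
  | zero => simp
  | succ n ih =>
    have hh : (-1 : ℝ) ^ n * (ℓ + n) * a + (-1) ^ ((n : ℤ) % 2) * a
        = (-1) ^ n * ((ℓ + (n + 1) : ℤ) * a) := by
      rw [neg_one_zpow_emod_two, zpow_natCast]; push_cast; ring
    obtain ⟨j, hj⟩ := exists_two_mul_abs_intCast_mul_div_eq (ℓ + (n + 1)) a
    rw [Function.iterate_succ_apply', ih, stripStep_of_div_eq_two_mul hk (j := j)]
    · rw [hh]
      refine Prod.ext ?_ (Prod.ext rfl ?_) <;> push_cast
      · ring
      · omega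
    · rw [hh, abs_mul, abs_pow, abs_neg, abs_one, one_pow, one_mul, hj]

end

theorem stripStep_expanding_general (m : ℕ) (hm : 0 < m) (a : ℝ)
    (ha : a = 1 / (2 * (m : ℝ) - 1))
    (ℓ : ℕ) (h₀ : ℝ) (hh₀ : h₀ = (ℓ : ℝ) * a) :
    (∀ n : ℕ, ((stripStep a)^[n] (h₀, a, 0)).2.1 = a) ∧
    (∀ n : ℕ, ((stripStep a)^[2 * n] (h₀, a, 0)).1 = h₀ + 2 * (n : ℝ) * a) ∧
    Filter.Tendsto (fun n : ℕ => ((stripStep a)^[2 * n] (h₀, a, 0)).1)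
      Filter.atTop Filter.atTop := by
  have hm' : (1 : ℝ) ≤ m := by exact_mod_cast hm
  have ha_pos : 0 < a := by rw [ha]; exact one_div_pos.mpr (by linarith)
  have hk : (1 - a) / a = 2 * ((m : ℤ) - 1 : ℤ) := by
    have : 2 * (m : ℝ) - 1 ≠ 0 := by linarith
    rw [ha]; push_cast; field_simp; ring
  have orbit (n : ℕ) :
      (stripStep a)^[n] (h₀, a, 0) = ((-1) ^ n * (ℓ + n) * a, a, (n : ℤ) % 2) := by
    simpa [hh₀] using stripStep_iterate_of_div_eq_two_mul hk ℓ n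
  have heven (n : ℕ) : ((stripStep a)^[2 * n] (h₀, a, 0)).1 = h₀ + 2 * (n : ℝ) * a := by
    rw [orbit, pow_mul, neg_one_sq, one_pow, hh₀]
    push_cast; ring
  refine ⟨fun n => by rw [orbit], heven, ?_⟩
  simp only [heven]
  exact Filter.tendsto_atTop_add_const_left _ _ <|
    (tendsto_natCast_atTop_atTop.const_mul_atTop two_pos).atTop_mul_const ha_pos

/-- For `a = 1/(2m − 1)` with `m` a positive integer and initial data `a₀ = a`,
`α₀ = 0`, `h₀ = ℓ·a` with `ℓ` a positive integer, the trajectory is expanding: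
`a_n = a` for all `n`, `h_{2n} = h₀ + 2n·a`, and `h_{2n} → +∞`. -/
theorem stripStep_expanding (m : ℕ) (hm : 0 < m) (a : ℝ)
    (ha : a = 1 / (2 * (m : ℝ) - 1))
    (ℓ : ℕ) (hℓ : 0 < ℓ) (h₀ : ℝ) (hh₀ : h₀ = (ℓ : ℝ) * a) :
    (∀ n : ℕ, ((stripStep a)^[n] (h₀, a, 0)).2.1 = a) ∧
    (∀ n : ℕ, ((stripStep a)^[2 * n] (h₀, a, 0)).1 = h₀ + 2 * (n : ℝ) * a) ∧
    Filter.Tendsto (fun n : ℕ => ((stripStep a)^[2 * n] (h₀, a, 0)).1)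
      Filter.atTop Filter.atTop :=
  stripStep_expanding_general m hm a ha ℓ h₀ hh₀
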